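/- arXiv:2110.00608 — 3 statements merged into one kernel-verified Lean document; each statement's English description precedes it below -/
import Mathlib

section
/- For nonnegative integers m1, m2, m1', m2', the set of integer lattice points of FFLV_4(m1+m1', m2+m2') equals the Minkowski sum of the sets of integer lattice points of FFLV_4(m1,m2) and FFLV_4(m1',m2'). -/
open Pointwise

/-- Lattice points of the FFLV polytope for `sp_4`,
with coordinates `(s11, s12̄, s22̄, s11̄)`. -/
def FFLV4Z (m1 m2 : ℕ) : Set (Fin 4 → ℤ) :=
  {s | (∀ i, 0 ≤ s i) ∧ s 0 ≤ (m1 : ℤ) ∧ s 2 ≤ (m2 : ℤ) ∧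
    s 0 + s 1 + s 3 ≤ (m1 : ℤ) + m2 ∧ s 0 + s 1 + s 2 ≤ (m1 : ℤ) + m2}

/-!
The family `FFLV4Z` is superadditive under Minkowski sum, since the defining inequalities add up.
Conversely, by induction it suffices to write a lattice point `s` of `FFLV4Z (m1 + 1) m2`
(resp. `FFLV4Z m1 (m2 + 1)`) as a point of `FFLV4Z m1 m2` plus one of `FFLV4Z 1 0`
(resp. `FFLV4Z 0 1`). The unit summand is chosen greedily: `e₀` if `s 0` is too large (resp. `e₂`,
or `e₂ + e₃` if `s 2` is too large and the first sum is violated too); otherwise, if a sum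
inequality is violated, `e₁` when `s 1 > 0`, and else `e₃`, because then `s 0 ≤ m1` and
`s 2 ≤ m2` force the second sum inequality to hold.
-/

theorem Set.add_eq_of_superadditive_of_succ_subset {G : Type*} [AddMonoid G]
    (F : ℕ → ℕ → Set G) (zero_mem : (0 : G) ∈ F 0 0)
    (add_subset : ∀ a b c d, F a b + F c d ⊆ F (a + c) (b + d))
    (succ_left_subset : ∀ a b, F (a + 1) b ⊆ F a b + F 1 0)
    (succ_right_subset : ∀ a b, F a (b + 1) ⊆ F a b + F 0 1) (a b c d : ℕ) :
    F (a + c) (b + d) = F a b + F c d := by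
  refine Set.Subset.antisymm ?_ (add_subset a b c d)
  induction c with
  | zero =>
    induction d with
    | zero => simpa using Set.add_subset_add_left (Set.singleton_subset_iff.2 zero_mem)
    | succ d ih =>
      calc F (a + 0) (b + (d + 1)) ⊆ F (a + 0) (b + d) + F 0 1 := succ_right_subset _ _
        _ ⊆ F a b + F 0 d + F 0 1 := Set.add_subset_add_right ih
        _ ⊆ F a b + F 0 (d + 1) := by
          rw [add_assoc]; exact Set.add_subset_add_left (add_subset 0 d 0 1)
  | succ c ih =>
    calc F (a + (c + 1)) (b + d) ⊆ F (a + c) (b + d) + F 1 0 := succ_left_subset _ _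
      _ ⊆ F a b + F c d + F 1 0 := Set.add_subset_add_right ih
      _ ⊆ F a b + F (c + 1) d := by
        rw [add_assoc]; simpa using Set.add_subset_add_left (add_subset c d 1 0)

namespace FFLV4Z

theorem mem_iff {m1 m2 : ℕ} {s : Fin 4 → ℤ} :
    s ∈ FFLV4Z m1 m2 ↔ 0 ≤ s 0 ∧ 0 ≤ s 1 ∧ 0 ≤ s 2 ∧ 0 ≤ s 3 ∧ s 0 ≤ m1 ∧ s 2 ≤ m2 ∧
      s 0 + s 1 + s 3 ≤ m1 + m2 ∧ s 0 + s 1 + s 2 ≤ m1 + m2 := by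
  simp only [FFLV4Z, Set.mem_ofPred_eq, Fin.forall_fin_succ, IsEmpty.forall_iff, and_true,
    and_assoc]
  rfl

theorem zero_mem_zero : (0 : Fin 4 → ℤ) ∈ FFLV4Z 0 0 := by
  simp [mem_iff]

theorem add_mem_add {a b c d : ℕ} {s t : Fin 4 → ℤ} (hs : s ∈ FFLV4Z a b)
    (ht : t ∈ FFLV4Z c d) : s + t ∈ FFLV4Z (a + c) (b + d) := by
  simp only [mem_iff, Pi.add_apply, Nat.cast_add] at hs ht ⊢
  omega

theorem add_subset (a b c d : ℕ) : FFLV4Z a b + FFLV4Z c d ⊆ FFLV4Z (a + c) (b + d) :=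
  Set.add_subset_iff.2 fun _ hs _ ht => add_mem_add hs ht

theorem sub_vec_mem_iff {m1 m2 : ℕ} {s : Fin 4 → ℤ} {x y z w : ℤ} :
    s - ![x, y, z, w] ∈ FFLV4Z m1 m2 ↔ x ≤ s 0 ∧ y ≤ s 1 ∧ z ≤ s 2 ∧ w ≤ s 3 ∧
      s 0 - x ≤ m1 ∧ s 2 - z ≤ m2 ∧ s 0 + s 1 + s 3 - (x + y + w) ≤ m1 + m2 ∧
      s 0 + s 1 + s 2 - (x + y + z) ≤ m1 + m2 := by
  simp only [mem_iff, Pi.sub_apply, Matrix.cons_val]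
  omega

theorem succ_left_subset (a b : ℕ) : FFLV4Z (a + 1) b ⊆ FFLV4Z a b + FFLV4Z 1 0 := by
  intro s hs
  suffices ∃ t ∈ FFLV4Z 1 0, s - t ∈ FFLV4Z a b by
    obtain ⟨t, ht, hst⟩ := this
    exact ⟨s - t, hst, t, ht, sub_add_cancel s t⟩
  simp only [mem_iff, Nat.cast_add, Nat.cast_one] at hs
  by_cases h0 : (a : ℤ) < s 0
  · exact ⟨![1, 0, 0, 0], by simp [mem_iff], sub_vec_mem_iff.2 (by omega)⟩
  by_cases hsum : (a : ℤ) + b < s 0 + s 1 + s 3 ∨ (a : ℤ) + b < s 0 + s 1 + s 2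
  · by_cases h1 : 1 ≤ s 1
    · exact ⟨![0, 1, 0, 0], by simp [mem_iff], sub_vec_mem_iff.2 (by omega)⟩
    · exact ⟨![0, 0, 0, 1], by simp [mem_iff], sub_vec_mem_iff.2 (by omega)⟩
  · exact ⟨![0, 0, 0, 0], by simp [mem_iff], sub_vec_mem_iff.2 (by omega)⟩

theorem succ_right_subset (a b : ℕ) : FFLV4Z a (b + 1) ⊆ FFLV4Z a b + FFLV4Z 0 1 := by
  intro s hs
  suffices ∃ t ∈ FFLV4Z 0 1, s - t ∈ FFLV4Z a b by
    obtain ⟨t, ht, hst⟩ := this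
    exact ⟨s - t, hst, t, ht, sub_add_cancel s t⟩
  simp only [mem_iff, Nat.cast_add, Nat.cast_one] at hs
  by_cases h2 : (b : ℤ) < s 2
  · by_cases h3 : (a : ℤ) + b < s 0 + s 1 + s 3
    · exact ⟨![0, 0, 1, 1], by simp [mem_iff], sub_vec_mem_iff.2 (by omega)⟩
    · exact ⟨![0, 0, 1, 0], by simp [mem_iff], sub_vec_mem_iff.2 (by omega)⟩
  by_cases hsum : (a : ℤ) + b < s 0 + s 1 + s 3 ∨ (a : ℤ) + b < s 0 + s 1 + s 2
  · by_cases h1 : 1 ≤ s 1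
    · exact ⟨![0, 1, 0, 0], by simp [mem_iff], sub_vec_mem_iff.2 (by omega)⟩
    · exact ⟨![0, 0, 0, 1], by simp [mem_iff], sub_vec_mem_iff.2 (by omega)⟩
  · exact ⟨![0, 0, 0, 0], by simp [mem_iff], sub_vec_mem_iff.2 (by omega)⟩

end FFLV4Z

theorem stmt_1 (m1 m2 m1' m2' : ℕ) :
    FFLV4Z (m1 + m1') (m2 + m2') = FFLV4Z m1 m2 + FFLV4Z m1' m2' :=
  Set.add_eq_of_superadditive_of_succ_subset FFLV4Z FFLV4Z.zero_mem_zero FFLV4Z.add_subset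
    FFLV4Z.succ_left_subset FFLV4Z.succ_right_subset m1 m2 m1' m2'
end

section
/- For nonnegative integers m1, m2, m1', m2', the set of integer lattice points of FFLV_5(m1+m1', m2+m2') equals the Minkowski sum of the sets of integer lattice points of FFLV_5(m1,m2) and FFLV_5(m1',m2'). -/
open Pointwise

/-- Lattice points of the FFLV polytope for `sp_5`, with coordinates
`(s11, s12, s12̄, s11̄, s22, s22̄)`. -/
def FFLV5Z (m1 m2 : ℕ) : Set (Fin 6 → ℤ) :=
  {s | (∀ i, 0 ≤ s i) ∧ s 0 ≤ (m1 : ℤ) ∧ s 4 ≤ (m2 : ℤ) ∧ s 4 + s 5 ≤ (m2 : ℤ) ∧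
    s 0 + s 1 + s 4 ≤ (m1 : ℤ) + m2 ∧
    s 0 + s 1 + s 2 + s 3 ≤ (m1 : ℤ) + m2 ∧
    s 0 + s 1 + s 2 + s 5 ≤ (m1 : ℤ) + m2 ∧
    s 0 + s 1 + s 4 + s 5 ≤ (m1 : ℤ) + m2}

theorem stmt_2 (m1 m2 m1' m2' : ℕ) :
    FFLV5Z (m1 + m1') (m2 + m2') = FFLV5Z m1 m2 + FFLV5Z m1' m2' := by
  ext s
  simp only [FFLV5Z, Set.mem_setOf_eq, Set.mem_add, Nat.cast_add]
  constructor
  · rintro ⟨hpos, h0, h4, h45, hD, hE, hF, hG⟩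
    have p0 := hpos 0; have p1 := hpos 1; have p2 := hpos 2
    have p3 := hpos 3; have p4 := hpos 4; have p5 := hpos 5
    set M : ℤ := (m1 : ℤ) + m2 with hM
    set x0 : ℤ := min (s 0) (m1 : ℤ) with hx0
    set x5 : ℤ := min (s 5) (m2 : ℤ) with hx5
    set x4 : ℤ := min (s 4) ((m2 : ℤ) - x5) with hx4
    set x1 : ℤ := min (s 1) (M - x0 - x4 - x5) with hx1
    set x2 : ℤ := min (s 2) (M - x0 - x1 - x5) with hx2
    set x3 : ℤ := min (s 3) (M - x0 - x1 - x2) with hx3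
    have n0 : (0:ℤ) ≤ x0 := by omega
    have n1 : (0:ℤ) ≤ x1 := by omega
    have n2 : (0:ℤ) ≤ x2 := by omega
    have n3 : (0:ℤ) ≤ x3 := by omega
    have n4 : (0:ℤ) ≤ x4 := by omega
    have n5 : (0:ℤ) ≤ x5 := by omega
    refine ⟨![x0, x1, x2, x3, x4, x5],
      ⟨?_, ?_, ?_, ?_, ?_, ?_, ?_, ?_⟩,
      fun i => s i - ![x0, x1, x2, x3, x4, x5] i,
      ⟨?_, ?_, ?_, ?_, ?_, ?_, ?_, ?_⟩, ?_⟩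
    · intro i
      fin_cases i
      exacts [n0, n1, n2, n3, n4, n5]
    · show x0 ≤ (m1 : ℤ); omega
    · show x4 ≤ (m2 : ℤ); omega
    · show x4 + x5 ≤ (m2 : ℤ); omega
    · show x0 + x1 + x4 ≤ (m1 : ℤ) + m2; omega
    · show x0 + x1 + x2 + x3 ≤ (m1 : ℤ) + m2; omega
    · show x0 + x1 + x2 + x5 ≤ (m1 : ℤ) + m2; omega
    · show x0 + x1 + x4 + x5 ≤ (m1 : ℤ) + m2; omega
    · intro i
      fin_cases i
      · show (0:ℤ) ≤ s 0 - x0; omega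
      · show (0:ℤ) ≤ s 1 - x1; omega
      · show (0:ℤ) ≤ s 2 - x2; omega
      · show (0:ℤ) ≤ s 3 - x3; omega
      · show (0:ℤ) ≤ s 4 - x4; omega
      · show (0:ℤ) ≤ s 5 - x5; omega
    · show s 0 - x0 ≤ (m1' : ℤ); omega
    · show s 4 - x4 ≤ (m2' : ℤ); omega
    · show s 4 - x4 + (s 5 - x5) ≤ (m2' : ℤ); omega
    · show s 0 - x0 + (s 1 - x1) + (s 4 - x4) ≤ (m1' : ℤ) + m2'; omega
    · show s 0 - x0 + (s 1 - x1) + (s 2 - x2) + (s 3 - x3) ≤ (m1' : ℤ) + m2'; omega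
    · show s 0 - x0 + (s 1 - x1) + (s 2 - x2) + (s 5 - x5) ≤ (m1' : ℤ) + m2'; omega
    · show s 0 - x0 + (s 1 - x1) + (s 4 - x4) + (s 5 - x5) ≤ (m1' : ℤ) + m2'; omega
    · funext i
      show ![x0, x1, x2, x3, x4, x5] i + (s i - ![x0, x1, x2, x3, x4, x5] i) = s i
      ring
  · rintro ⟨x, ⟨xp, hx0, hx4, hx45, hxD, hxE, hxF, hxG⟩,
      y, ⟨yp, hy0, hy4, hy45, hyD, hyE, hyF, hyG⟩, rfl⟩
    refine ⟨fun i => add_nonneg (xp i) (yp i), ?_, ?_, ?_, ?_, ?_, ?_, ?_⟩ <;>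
      simp only [Pi.add_apply] <;> omega
end

section
/- For nonnegative integers m1, m2, the number of lattice points of FFLV_4(m1,m2) (the dimension of the irreducible sp_4 representation with highest weight m1·ω1 + m2·ω2) equals (m1+1)(m2+1)(m1+m2+2)(m1+2m2+3)/6. -/
open Finset in
private lemma cnt_fflv (n k M : ℕ) :
    (∑ x ∈ range n, if k + x ≤ M then 1 else 0) = min n (M + 1 - k) := by
  induction n with
  | zero => simp
  | succ n ih => rw [sum_range_succ, ih]; split_ifs with h <;> omega

open Finset in
private lemma sq_sum_fflv (n : ℕ) :
    6 * ∑ t ∈ range (n+1), t * t = n * (n+1) * (2*n+1) := by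
  induction n with
  | zero => simp
  | succ n ih => rw [sum_range_succ, Nat.mul_add, ih]; ring

open Finset in
private lemma Gform_fflv (m2 j : ℕ) :
    6 * ∑ t ∈ range (m2+1+j), min (m2+1) t * t
      = m2*(m2+1)*(2*m2+1) + 3*(m2+1)*j*(2*m2+j+1) := by
  induction j with
  | zero =>
    have h : ∀ t ∈ range (m2+1), min (m2+1) t * t = t * t := by
      intro t ht; rw [mem_range] at ht; rw [min_eq_right (by omega)]
    rw [Nat.add_zero, sum_congr rfl h, sq_sum_fflv]; ring
  | succ j ih =>
    have h : m2+1+(j+1) = (m2+1+j)+1 := rfl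
    rw [h, sum_range_succ, Nat.mul_add, ih, min_eq_left (by omega)]
    ring

open Finset in
private lemma shift_fflv (f : ℕ → ℕ) (hf : f 0 = 0) (n k : ℕ) (h : k ≤ n) :
    ∑ b ∈ range n, f (k - b) = ∑ t ∈ range (k+1), f t := by
  have key : ∑ b ∈ range (n+1), f (k - b) = ∑ t ∈ range (k+1), f t := by
    rw [← Finset.sum_range_reflect (fun t => f t) (k+1)]
    simp only [Nat.add_sub_cancel]
    refine (Finset.sum_subset (Finset.range_subset_range.2 (by omega)) ?_).symm
    intro x hx hx'
    rw [Finset.mem_range] at hx hx'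
    have hkx : k - x = 0 := by omega
    rw [hkx, hf]
  rw [Finset.sum_range_succ] at key
  have hkn : k - n = 0 := by omega
  rw [hkn, hf, add_zero] at key
  exact key

open Finset in
private lemma refl_sum_fflv (g : ℕ → ℕ) (n : ℕ) :
    ∑ a ∈ range n, g (n - a) = ∑ a ∈ range n, g (a+1) := by
  rw [← Finset.sum_range_reflect (fun a => g (n - a)) n]
  exact sum_congr rfl fun j hj => by rw [mem_range] at hj; congr 1; omega

open Finset in
private lemma final_fflv (m1 m2 : ℕ) :
    ∑ a ∈ range (m1+1),
      (m2*(m2+1)*(2*m2+1) + 3*(m2+1)*((a+1))*(2*m2+(a+1)+1))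
      = (m1+1)*(m2+1)*(m1+m2+2)*(m1+2*m2+3) := by
  induction m1 with
  | zero => simp [Finset.sum_range_one]; ring
  | succ m1 ih => rw [sum_range_succ, ih]; ring

open Finset in
private lemma card6_fflv (m1 m2 : ℕ) :
    6 * (((range (m1+1)) ×ˢ (range (m1+m2+1)) ×ˢ (range (m2+1)) ×ˢ (range (m1+m2+1))).filter
        (fun x => x.1 + x.2.1 + x.2.2.2 ≤ m1+m2 ∧ x.1 + x.2.1 + x.2.2.1 ≤ m1+m2)).card
      = (m1+1)*(m2+1)*(m1+m2+2)*(m1+2*m2+3) := by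
  set M := m1 + m2 with hM
  rw [Finset.card_filter]
  rw [Finset.sum_product]
  simp only [Finset.sum_product]
  have step1 : ∀ a ∈ range (m1+1), ∀ b ∈ range (M+1),
      (∑ c ∈ range (m2+1), ∑ d ∈ range (M+1),
        (if a + b + d ≤ M ∧ a + b + c ≤ M then (1:ℕ) else 0))
      = min (m2+1) ((M+1-a) - b) * ((M+1-a) - b) := by
    intro a _ b _
    have h1 : ∀ c d : ℕ, (if a + b + d ≤ M ∧ a + b + c ≤ M then (1:ℕ) else 0)
        = (if (a+b) + c ≤ M then (1:ℕ) else 0) * (if (a+b) + d ≤ M then (1:ℕ) else 0) := by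
      intro c d; split_ifs <;> omega
    simp_rw [h1]
    rw [← Finset.sum_mul_sum, cnt_fflv, cnt_fflv]
    have h2 : min (M+1) (M + 1 - (a+b)) = M + 1 - (a+b) := min_eq_right (Nat.sub_le _ _)
    rw [h2]
    congr 1 <;> omega
  rw [Finset.sum_congr rfl (fun a ha => Finset.sum_congr rfl (fun b hb => step1 a ha b hb))]
  have step2 : ∀ a ∈ range (m1+1),
      6 * ∑ b ∈ range (M+1), min (m2+1) ((M+1-a) - b) * ((M+1-a) - b)
      = m2*(m2+1)*(2*m2+1) + 3*(m2+1)*((m1+1)-a)*(2*m2+((m1+1)-a)+1) := by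
    intro a ha
    rw [mem_range] at ha
    rw [shift_fflv (fun t => min (m2+1) t * t) (by simp) (M+1) (M+1-a) (by omega)]
    have harg : M + 1 - a + 1 = m2 + 1 + (m1 + 1 - a) := by omega
    rw [harg, Gform_fflv]
  rw [Finset.mul_sum, Finset.sum_congr rfl step2]
  rw [refl_sum_fflv (fun j => m2*(m2+1)*(2*m2+1) + 3*(m2+1)*j*(2*m2+j+1)) (m1+1)]
  exact final_fflv m1 m2

open Finset in
private lemma card_eq_fflv (m1 m2 : ℕ) :
    (FFLV4Z m1 m2).ncard =
      (((range (m1+1)) ×ˢ (range (m1+m2+1)) ×ˢ (range (m2+1)) ×ˢ (range (m1+m2+1))).filter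
        (fun x => x.1 + x.2.1 + x.2.2.2 ≤ m1+m2 ∧ x.1 + x.2.1 + x.2.2.1 ≤ m1+m2)).card := by
  set M := m1 + m2 with hM
  set S := (((range (m1+1)) ×ˢ (range (M+1)) ×ˢ (range (m2+1)) ×ˢ (range (M+1))).filter
        (fun x => x.1 + x.2.1 + x.2.2.2 ≤ M ∧ x.1 + x.2.1 + x.2.2.1 ≤ M)) with hS
  set φ : ℕ × ℕ × ℕ × ℕ → (Fin 4 → ℤ) :=
    fun x => ![(x.1 : ℤ), x.2.1, x.2.2.1, x.2.2.2] with hφ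
  have hinj : Function.Injective φ := by
    rintro ⟨a, b, c, d⟩ ⟨a', b', c', d'⟩ h
    have h0 := congrFun h 0
    have h1 := congrFun h 1
    have h2 := congrFun h 2
    have h3 := congrFun h 3
    simp [hφ] at h0 h1 h2 h3
    simp [h0, h1, h2, h3]
  have himg : FFLV4Z m1 m2 = φ '' ↑S := by
    ext s
    constructor
    · rintro ⟨hpos, h0, h2, h3, h4⟩
      refine ⟨((s 0).toNat, (s 1).toNat, (s 2).toNat, (s 3).toNat), ?_, ?_⟩
      · have p0 := hpos 0; have p1 := hpos 1; have p2 := hpos 2; have p3 := hpos 3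
        simp only [hS, Finset.mem_coe, Finset.mem_filter, Finset.mem_product, Finset.mem_range]
        refine ⟨⟨?_, ?_, ?_, ?_⟩, ?_, ?_⟩ <;> omega
      · funext i
        fin_cases i <;>
          simp [hφ, Int.toNat_of_nonneg (hpos 0), Int.toNat_of_nonneg (hpos 1),
            Int.toNat_of_nonneg (hpos 2), Int.toNat_of_nonneg (hpos 3)]
    · rintro ⟨⟨a, b, c, d⟩, hx, rfl⟩
      simp only [hS, Finset.mem_coe, Finset.mem_filter, Finset.mem_product, Finset.mem_range] at hx
      obtain ⟨⟨ha, hb, hc, hd⟩, hcond1, hcond2⟩ := hx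
      refine ⟨?_, ?_, ?_, ?_, ?_⟩
      · intro i; fin_cases i <;> simp [hφ]
      all_goals simp [hφ] <;> omega
  rw [himg, Set.ncard_image_of_injective _ hinj, Set.ncard_coe_finset]

/-- Weyl dimension formula for `sp_4` via FFLV lattice points. -/
theorem stmt_15 (m1 m2 : ℕ) :
    (FFLV4Z m1 m2).ncard =
      (m1 + 1) * (m2 + 1) * (m1 + m2 + 2) * (m1 + 2 * m2 + 3) / 6 := by
  rw [card_eq_fflv]
  have h := card6_fflv m1 m2
  omega
end
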